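/- (Theorem 3, sufficiency bound.) Assume N ≥ |𝓜| + 1 and 1 ≤ k ≤ N, and let 𝔾 be a nonempty set of Borel probability measures on valuations with ambiguity set 𝔽 = {F : F̄ ∈ 𝔾}. If the menu 𝓜 is 𝔾-sufficient, then inf_{F∈𝔽} E_F[Rᵏ_𝓜(v)] ≥ inf_{F∈𝔽} V*(F) − (k−1)·|𝓜|·v̄/N. -/

import Mathlib

/-!
For each bidder `n` and bundle `b`, `vⁿ_b ≤ v⁽ᵏ⁾_b + v̄ · [v⁽ᵏ⁾_b < vⁿ_b]`, and for each bundle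
fewer than `k` bidders are strictly above `v⁽ᵏ⁾_b`. Maximising over the menu and summing over
bidders gives `∑ₙ max_𝓜 vⁿ ≤ N · Rᵏ_𝓜(v) + (k - 1) |𝓜| v̄` pointwise. In expectation the left side
is `N · E_F̄[max_𝓜]`, which is at least `N · inf_𝔾 E[max_𝓜] = N · inf_𝔾 E[max_{2^S}]` by
sufficiency. Finally, for `G ∈ 𝔾` the profile in which all bidders share one valuation drawn from
`G` lies in `𝔽` and has `V* ≤ E_G[max_{2^S}]`, so `inf_𝔽 V* ≤ inf_𝔾 E[max_{2^S}]`.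
-/

open MeasureTheory
open scoped ENNReal BigOperators

namespace RankGuaranteedAuctions

/-- A bundle of items, where the set of items is `Fin M`. -/
abbrev Bundle (M : ℕ) := Finset (Fin M)

/-- A valuation assigns a real value to every bundle. -/
abbrev Valuation (M : ℕ) := Bundle M → ℝ

/-- A valuation is normalized: value `0` for the empty bundle and values in `[0, vbar]`. -/
def IsValuation (M : ℕ) (vbar : ℝ) (v : Valuation M) : Prop :=
  v ∅ = 0 ∧ ∀ b : Bundle M, 0 ≤ v b ∧ v b ≤ vbar

/-- A menu is a nonempty collection of nonempty bundles. -/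
def IsMenu (M : ℕ) (Menu : Finset (Bundle M)) : Prop :=
  Menu.Nonempty ∧ ∅ ∉ Menu

/-- The complete menu `2^S` of all nonempty bundles. -/
noncomputable def completeMenu (M : ℕ) : Finset (Bundle M) :=
  Finset.univ.erase ∅

/-- A feasible allocation: a set of pairwise disjoint bundles from the menu. -/
def Feasible (M : ℕ) (Menu X : Finset (Bundle M)) : Prop :=
  X ⊆ Menu ∧ ∀ b ∈ X, ∀ b' ∈ X, b ≠ b' → Disjoint b b'

/-- The maximum of `∑ b ∈ X, f b` over feasible allocations `X` from the menu. -/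
noncomputable def maxAlloc (M : ℕ) (Menu : Finset (Bundle M)) (f : Bundle M → ℝ) : ℝ :=
  sSup {y : ℝ | ∃ X : Finset (Bundle M), Feasible M Menu X ∧ y = ∑ b ∈ X, f b}

/-- The `k`-th highest value among `w 0, …, w (N-1)` (for `1 ≤ k ≤ N`):
the maximum over sets `T` of `k` bidders of the minimum of `w` on `T`. -/
noncomputable def kthHighest (N : ℕ) (w : Fin N → ℝ) (k : ℕ) : ℝ :=
  sSup {x : ℝ | ∃ T : Finset (Fin N), T.card = k ∧ x = sInf (w '' (T : Set (Fin N)))}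

/-- The `k`-th rank guarantee `R^k_𝓜(v)`. -/
noncomputable def rankGuarantee (M N : ℕ) (Menu : Finset (Bundle M))
    (v : Fin N → Valuation M) (k : ℕ) : ℝ :=
  maxAlloc M Menu fun b => kthHighest N (fun n => v n b) k

/-- The ex-post efficient surplus: the maximum over feasible allocations `X` with
`|X| ≤ N` and injective assignments `ι` of bundles in `X` to bidders of the total value. -/
noncomputable def surplusEx (M N : ℕ) (Menu : Finset (Bundle M))
    (v : Fin N → Valuation M) : ℝ :=
  sSup {y : ℝ | ∃ X : Finset (Bundle M), Feasible M Menu X ∧ X.card ≤ N ∧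
    ∃ ι : Bundle M → Fin N, Set.InjOn ι ↑X ∧ y = ∑ b ∈ X, v (ι b) b}

/-- The average `F̄ = (1/N) ∑ₙ Fₙ` of the bidder-marginals of `F`. -/
noncomputable def avgMarginal (M N : ℕ) (F : Measure (Fin N → Valuation M)) :
    Measure (Valuation M) :=
  (N : ℝ≥0∞)⁻¹ • ∑ n : Fin N, F.map (fun v => v n)

/-- The ex-ante efficient surplus `V_𝓜(F)`. -/
noncomputable def Vsurplus (M N : ℕ) (Menu : Finset (Bundle M))
    (F : Measure (Fin N → Valuation M)) : ℝ :=
  ∫ v, surplusEx M N Menu v ∂F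

/-- A Borel probability measure on valuation profiles (supported on profiles of
valuations bounded by `vbar`). -/
def ProfileOK (M N : ℕ) (vbar : ℝ) (F : Measure (Fin N → Valuation M)) : Prop :=
  IsProbabilityMeasure F ∧ F {v | ∀ n, IsValuation M vbar (v n)} = 1

/-- A Borel probability measure on valuations (supported on valuations bounded by `vbar`). -/
def ValOK (M : ℕ) (vbar : ℝ) (G : Measure (Valuation M)) : Prop :=
  IsProbabilityMeasure G ∧ G {w | IsValuation M vbar w} = 1

/-- `κ` is a partition of the bundle `b` into nonempty, pairwise disjoint parts. -/
def IsPartitionOf (M : ℕ) (κ : Finset (Bundle M)) (b : Bundle M) : Prop :=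
  (∀ c ∈ κ, c ≠ ∅) ∧ (∀ c ∈ κ, ∀ c' ∈ κ, c ≠ c' → Disjoint c c') ∧ κ.sup id = b

/-- Feasibility for homogeneous goods: total number of allocated items is at most `M`. -/
def FeasibleQ (M : ℕ) (Menu X : Finset (Bundle M)) : Prop :=
  X ⊆ Menu ∧ ∑ b ∈ X, b.card ≤ M

/-- The maximum of `∑ b ∈ X, f b` over homogeneous-goods-feasible allocations `X`. -/
noncomputable def maxAllocQ (M : ℕ) (Menu : Finset (Bundle M)) (f : Bundle M → ℝ) : ℝ :=
  sSup {y : ℝ | ∃ X : Finset (Bundle M), FeasibleQ M Menu X ∧ y = ∑ b ∈ X, f b}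

/-- An assignment of pairwise disjoint bundles to the `N` bidders. -/
def IsAssignment (M N : ℕ) (a : Fin N → Bundle M) : Prop :=
  ∀ n n' : Fin N, n ≠ n' → Disjoint (a n) (a n')

/-- An assignment is efficient if it maximizes total value over all assignments. -/
def IsEfficient (M N : ℕ) (v : Fin N → Valuation M) (a : Fin N → Bundle M) : Prop :=
  IsAssignment M N a ∧
    ∀ a' : Fin N → Bundle M, IsAssignment M N a' → ∑ n, v n (a' n) ≤ ∑ n, v n (a n)

/-- The VCG revenue at the efficient assignment `a`: the sum over bidders `n` of
`max_{assignments to bidders other than n} ∑_{n' ≠ n} v^{n'} − ∑_{n' ≠ n} v^{n'}(a n')`. -/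
noncomputable def vcgRevenue (M N : ℕ) (v : Fin N → Valuation M)
    (a : Fin N → Bundle M) : ℝ :=
  ∑ n : Fin N,
    (sSup {y : ℝ | ∃ a' : Fin N → Bundle M, IsAssignment M N a' ∧ a' n = ∅ ∧
        y = ∑ n' ∈ Finset.univ.erase n, v n' (a' n')}
      - ∑ n' ∈ Finset.univ.erase n, v n' (a n'))

/-- An unbounded valuation: value `0` for the empty bundle and nonnegative values. -/
def IsValuationNN (M : ℕ) (v : Valuation M) : Prop :=
  v ∅ = 0 ∧ ∀ b : Bundle M, 0 ≤ v b

/-- The top-`(k-1)/N` quantile of `v b` under `G`. -/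
noncomputable def quantileQ (M N k : ℕ) (G : Measure (Valuation M)) (b : Bundle M) : ℝ :=
  sInf {q : ℝ | 0 ≤ q ∧ G {w | q < w b} ≤ ((k - 1 : ℕ) : ℝ≥0∞) / (N : ℝ≥0∞)}

section FiniteSup

variable {α : Type*} {P : α → Prop}

theorem setOf_exists_eq_image (f : α → ℝ) :
    {y : ℝ | ∃ a, P a ∧ y = f a} = f '' {a | P a} := by
  ext y
  constructor <;> rintro ⟨a, ha, rfl⟩ <;> exact ⟨a, ha, rfl⟩

variable [Finite α]

theorem le_sSup_setOf_exists {f : α → ℝ} {a : α} (ha : P a) :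
    f a ≤ sSup {y : ℝ | ∃ a, P a ∧ y = f a} := by
  rw [setOf_exists_eq_image]
  exact le_csSup ((Set.toFinite _).image f).bddAbove ⟨a, ha, rfl⟩

theorem exists_sSup_setOf_exists_eq {f : α → ℝ} (h : ∃ a, P a) :
    ∃ a, P a ∧ sSup {y : ℝ | ∃ a, P a ∧ y = f a} = f a := by
  rw [setOf_exists_eq_image]
  obtain ⟨a, ha, hmax⟩ := Set.exists_max_image {a | P a} f (Set.toFinite _) h
  refine ⟨a, ha, le_antisymm ?_ (le_csSup ((Set.toFinite _).image f).bddAbove ⟨a, ha, rfl⟩)⟩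
  exact csSup_le (Set.Nonempty.image f h) (by rintro _ ⟨b, hb, rfl⟩; exact hmax b hb)

theorem measurable_sSup_setOf_exists {δ : Type*} [MeasurableSpace δ] {f : α → δ → ℝ}
    (hf : ∀ a, Measurable (f a)) :
    Measurable fun x => sSup {y : ℝ | ∃ a, P a ∧ y = f a x} := by
  simp only [setOf_exists_eq_image, sSup_image']
  exact Measurable.iSup fun a => hf a

end FiniteSup

section KthHighest

variable {N k : ℕ}

theorem exists_card_eq_kthHighest_eq (w : Fin N → ℝ) (hkN : k ≤ N) :
    ∃ T : Finset (Fin N), T.card = k ∧ kthHighest N w k = sInf (w '' (T : Set (Fin N))) := by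
  obtain ⟨T, -, hT⟩ := Finset.exists_subset_card_eq (s := (Finset.univ : Finset (Fin N)))
    (by simpa using hkN)
  exact exists_sSup_setOf_exists_eq ⟨T, hT⟩

theorem exists_kthHighest_eq (w : Fin N → ℝ) (hk1 : 1 ≤ k) (hkN : k ≤ N) :
    ∃ n, kthHighest N w k = w n := by
  obtain ⟨T, hT, heq⟩ := exists_card_eq_kthHighest_eq w hkN
  have hne : (T : Set (Fin N)).Nonempty := 
    Finset.coe_nonempty.mpr (Finset.card_pos.mp (by omega))
  obtain ⟨n, -, hn⟩ := (hne.image w).csInf_mem ((Set.toFinite _).image w)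
  exact ⟨n, heq.trans hn.symm⟩

theorem card_filter_kthHighest_lt (w : Fin N → ℝ) (hk1 : 1 ≤ k) :
    (Finset.univ.filter fun n => kthHighest N w k < w n).card < k := by
  by_contra! hcard
  obtain ⟨T, hTsub, hT⟩ := Finset.exists_subset_card_eq hcard
  have hne : (T : Set (Fin N)).Nonempty := 
    Finset.coe_nonempty.mpr (Finset.card_pos.mp (by omega))
  obtain ⟨n, hnT, hn⟩ := (hne.image w).csInf_mem ((Set.toFinite _).image w)
  have hle : sInf (w '' (T : Set (Fin N))) ≤ kthHighest N w k :=
    le_sSup_setOf_exists (P := fun T : Finset (Fin N) => T.card = k)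
      (f := fun T : Finset (Fin N) => sInf (w '' (T : Set (Fin N)))) hT
  have hlt : kthHighest N w k < w n := (Finset.mem_filter.mp (hTsub hnT)).2
  linarith

theorem sum_ite_kthHighest_lt_le (w : Fin N → ℝ) (hk1 : 1 ≤ k) {c : ℝ} (hc : 0 ≤ c) :
    ∑ n, (if kthHighest N w k < w n then c else 0) ≤ ((k : ℝ) - 1) * c := by
  rw [← Finset.sum_filter, Finset.sum_const, nsmul_eq_mul]
  have hcard := card_filter_kthHighest_lt w hk1
  gcongr
  have : ((Finset.univ.filter fun n => kthHighest N w k < w n).card : ℝ) + 1 ≤ k := by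
    exact_mod_cast hcard
  linarith

theorem measurable_kthHighest {δ : Type*} [MeasurableSpace δ] {w : Fin N → δ → ℝ}
    (hw : ∀ n, Measurable (w n)) : Measurable fun x => kthHighest N (fun n => w n x) k := by
  refine measurable_sSup_setOf_exists fun T => ?_
  simp only [sInf_image']
  exact Measurable.iInf fun n => hw n

end KthHighest

section Valuations

variable {M N k : ℕ} {vbar : ℝ}

theorem IsValuation.nonneg {v : Valuation M} (hv : IsValuation M vbar v) (b : Bundle M) :
    0 ≤ v b :=
  (hv.2 b).1

theorem IsValuation.le {v : Valuation M} (hv : IsValuation M vbar v) (b : Bundle M) :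
    v b ≤ vbar :=
  (hv.2 b).2

theorem IsValuation.vbar_nonneg {v : Valuation M} (hv : IsValuation M vbar v) : 0 ≤ vbar :=
  (hv.nonneg ∅).trans (hv.le ∅)

theorem measurableSet_isValuation : MeasurableSet {w : Valuation M | IsValuation M vbar w} := by
  simp only [IsValuation, Set.ofPred_and, Set.ofPred_forall]
  exact (measurable_pi_apply ∅ (measurableSet_singleton 0)).inter
    (MeasurableSet.iInter fun b => (measurable_pi_apply b measurableSet_Ici).inter
      (measurable_pi_apply b measurableSet_Iic))

/-- The paper's `v⁽ᵏ⁾`. -/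
noncomputable def kthValuation (N k : ℕ) (v : Fin N → Valuation M) : Valuation M :=
  fun b => kthHighest N (fun n => v n b) k

theorem isValuation_kthValuation {v : Fin N → Valuation M} (hk1 : 1 ≤ k) (hkN : k ≤ N)
    (hv : ∀ n, IsValuation M vbar (v n)) : IsValuation M vbar (kthValuation N k v) := by
  refine ⟨?_, fun b => ?_⟩
  · obtain ⟨n, hn⟩ := exists_kthHighest_eq (fun n => v n ∅) hk1 hkN
    exact hn.trans (hv n).1
  · obtain ⟨n, hn⟩ := exists_kthHighest_eq (fun n => v n b) hk1 hkN
    simp only [kthValuation, hn]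
    exact (hv n).2 b

theorem measurable_kthValuation : Measurable (kthValuation (M := M) N k) :=
  measurable_pi_lambda _ fun b =>
    measurable_kthHighest fun n => (measurable_pi_apply b).comp (measurable_pi_apply n)

end Valuations

section MaxAlloc

variable {M : ℕ} {Menu : Finset (Bundle M)} {f g : Valuation M}

theorem feasible_empty : Feasible M Menu ∅ :=
  ⟨Finset.empty_subset _, by simp⟩

theorem sum_le_maxAlloc {X : Finset (Bundle M)} (hX : Feasible M Menu X) :
    ∑ b ∈ X, f b ≤ maxAlloc M Menu f :=
  le_sSup_setOf_exists (f := fun X => ∑ b ∈ X, f b) hX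

theorem exists_feasible_maxAlloc_eq :
    ∃ X, Feasible M Menu X ∧ maxAlloc M Menu f = ∑ b ∈ X, f b :=
  exists_sSup_setOf_exists_eq ⟨∅, feasible_empty⟩

theorem maxAlloc_nonneg : 0 ≤ maxAlloc M Menu f := by
  simpa using sum_le_maxAlloc (f := f) (feasible_empty (Menu := Menu))

theorem maxAlloc_mono (h : f ≤ g) : maxAlloc M Menu f ≤ maxAlloc M Menu g := by
  obtain ⟨X, hX, heq⟩ := exists_feasible_maxAlloc_eq (Menu := Menu) (f := f)
  rw [heq]
  exact (Finset.sum_le_sum fun b _ => h b).trans (sum_le_maxAlloc hX)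

theorem maxAlloc_add_le : maxAlloc M Menu (f + g) ≤ maxAlloc M Menu f + maxAlloc M Menu g := by
  obtain ⟨X, hX, heq⟩ := exists_feasible_maxAlloc_eq (Menu := Menu) (f := f + g)
  rw [heq, Pi.add_def, Finset.sum_add_distrib]
  exact add_le_add (sum_le_maxAlloc hX) (sum_le_maxAlloc hX)

theorem maxAlloc_le_sum_menu (hf : 0 ≤ f) : maxAlloc M Menu f ≤ ∑ b ∈ Menu, f b := by
  obtain ⟨X, hX, heq⟩ := exists_feasible_maxAlloc_eq (Menu := Menu) (f := f)
  rw [heq]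
  exact Finset.sum_le_sum_of_subset_of_nonneg hX.1 fun b _ _ => hf b

theorem maxAlloc_le_card_mul {vbar : ℝ} (hf : IsValuation M vbar f) :
    maxAlloc M Menu f ≤ Menu.card * vbar := by
  calc maxAlloc M Menu f ≤ ∑ b ∈ Menu, f b := maxAlloc_le_sum_menu hf.nonneg
    _ ≤ ∑ _b ∈ Menu, vbar := Finset.sum_le_sum fun b _ => hf.le b
    _ = Menu.card * vbar := by rw [Finset.sum_const, nsmul_eq_mul]

theorem measurable_maxAlloc : Measurable (maxAlloc M Menu) :=
  measurable_sSup_setOf_exists fun _ => Finset.measurable_sum _ fun b _ => measurable_pi_apply b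

theorem integrable_maxAlloc_comp {α : Type*} [MeasurableSpace α] {μ : Measure α}
    [IsFiniteMeasure μ] {vbar : ℝ} {φ : α → Valuation M} (hφ : Measurable φ)
    (hval : ∀ᵐ x ∂μ, IsValuation M vbar (φ x)) :
    Integrable (fun x => maxAlloc M Menu (φ x)) μ := by
  refine Integrable.of_bound (measurable_maxAlloc.comp hφ).aestronglyMeasurable
    (Menu.card * vbar) (hval.mono fun x hx => ?_)
  rw [Real.norm_of_nonneg maxAlloc_nonneg]
  exact maxAlloc_le_card_mul hx

end MaxAlloc

section RankGuarantee

variable {M N k : ℕ} {vbar : ℝ} {Menu : Finset (Bundle M)}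

theorem sum_maxAlloc_le_rankGuarantee {v : Fin N → Valuation M} (hk1 : 1 ≤ k) (hkN : k ≤ N)
    (hv : ∀ n, IsValuation M vbar (v n)) :
    ∑ n, maxAlloc M Menu (v n) ≤
      N * rankGuarantee M N Menu v k + ((k : ℝ) - 1) * Menu.card * vbar := by
  set g := kthValuation N k v
  have hg : IsValuation M vbar g := isValuation_kthValuation hk1 hkN hv
  set excess : Fin N → Valuation M := fun n b => if g b < v n b then vbar else 0
  have hexcess_nonneg : ∀ n, 0 ≤ excess n := fun n b => by
    simp only [excess, Pi.zero_apply]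
    split_ifs
    exacts [hg.vbar_nonneg, le_rfl]
  have hle_add : ∀ n, v n ≤ g + excess n := fun n b => by
    simp only [Pi.add_apply, excess]
    split_ifs with h
    · linarith [(hv n).le b, hg.nonneg b]
    · linarith [not_lt.mp h]
  have hbidder : ∀ n, maxAlloc M Menu (v n) ≤
      rankGuarantee M N Menu v k + ∑ b ∈ Menu, excess n b := fun n =>
    (maxAlloc_mono (hle_add n)).trans <| maxAlloc_add_le.trans <|
      add_le_add_right (maxAlloc_le_sum_menu (hexcess_nonneg n)) _
  have hbundle : ∀ b, ∑ n, excess n b ≤ ((k : ℝ) - 1) * vbar := fun b =>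
    sum_ite_kthHighest_lt_le (fun n => v n b) hk1 hg.vbar_nonneg
  calc ∑ n, maxAlloc M Menu (v n)
      ≤ ∑ n, (rankGuarantee M N Menu v k + ∑ b ∈ Menu, excess n b) :=
        Finset.sum_le_sum fun n _ => hbidder n
    _ = N * rankGuarantee M N Menu v k + ∑ b ∈ Menu, ∑ n, excess n b := by
        rw [Finset.sum_add_distrib, Finset.sum_comm]
        simp
    _ ≤ N * rankGuarantee M N Menu v k + ∑ _b ∈ Menu, ((k : ℝ) - 1) * vbar := by
        gcongr with b
        exact hbundle b
    _ = N * rankGuarantee M N Menu v k + ((k : ℝ) - 1) * Menu.card * vbar := by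
        rw [Finset.sum_const, nsmul_eq_mul]
        ring

end RankGuarantee

section Measures

variable {M N k : ℕ} {vbar : ℝ} {Menu : Finset (Bundle M)}

theorem ValOK.ae_isValuation {G : Measure (Valuation M)} (hG : ValOK M vbar G) :
    ∀ᵐ w ∂G, IsValuation M vbar w := by
  have := hG.1
  rw [ae_iff_measure_eq measurableSet_isValuation.nullMeasurableSet, hG.2, measure_univ]

theorem ProfileOK.ae_isValuation {F : Measure (Fin N → Valuation M)}
    (hF : ProfileOK M N vbar F) : ∀ᵐ v ∂F, ∀ n, IsValuation M vbar (v n) := by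
  have := hF.1
  have hmeas : MeasurableSet {v : Fin N → Valuation M | ∀ n, IsValuation M vbar (v n)} := by
    simp only [Set.ofPred_forall]
    exact MeasurableSet.iInter fun n => measurableSet_isValuation.preimage (measurable_pi_apply n)
  rw [ae_iff_measure_eq hmeas.nullMeasurableSet, hF.2, measure_univ]

theorem integral_avgMarginal {F : Measure (Fin N → Valuation M)} {f : Valuation M → ℝ}
    (hf : Measurable f) (hint : ∀ n, Integrable (fun v => f (v n)) F) :
    ∫ w, f w ∂avgMarginal M N F = (N : ℝ)⁻¹ * ∑ n, ∫ v, f (v n) ∂F := by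
  have hmap : ∀ n : Fin N, Integrable f (F.map fun v => v n) := fun n =>
    (integrable_map_measure hf.aestronglyMeasurable
      (measurable_pi_apply n).aemeasurable).2 (hint n)
  rw [avgMarginal, integral_smul_measure, integral_finsetSum_measure fun n _ => hmap n,
    ENNReal.toReal_inv, ENNReal.toReal_natCast, smul_eq_mul]
  congr 1
  exact Finset.sum_congr rfl fun n _ =>
    integral_map (measurable_pi_apply n).aemeasurable hf.aestronglyMeasurable

theorem integral_maxAlloc_avgMarginal_sub_le {F : Measure (Fin N → Valuation M)}
    (hk1 : 1 ≤ k) (hkN : k ≤ N) (hF : ProfileOK M N vbar F) :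
    ∫ w, maxAlloc M Menu w ∂avgMarginal M N F - ((k : ℝ) - 1) * Menu.card * vbar / N ≤
      ∫ v, rankGuarantee M N Menu v k ∂F := by
  have := hF.1
  have hN : (0 : ℝ) < N := by exact_mod_cast hk1.trans hkN
  have hval := hF.ae_isValuation
  have hintAlloc : ∀ n, Integrable (fun v : Fin N → Valuation M => maxAlloc M Menu (v n)) F :=
    fun n => integrable_maxAlloc_comp (measurable_pi_apply n) (hval.mono fun v hv => hv n)
  have hintRank : Integrable (fun v => rankGuarantee M N Menu v k) F :=
    integrable_maxAlloc_comp measurable_kthValuation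
      (hval.mono fun v hv => isValuation_kthValuation hk1 hkN hv)
  have hsum : ∑ n, ∫ v, maxAlloc M Menu (v n) ∂F ≤
      N * ∫ v, rankGuarantee M N Menu v k ∂F + ((k : ℝ) - 1) * Menu.card * vbar := by
    rw [← integral_finsetSum _ fun n _ => hintAlloc n, ← integral_const_mul]
    calc ∫ v, ∑ n, maxAlloc M Menu (v n) ∂F
        ≤ ∫ v, (N * rankGuarantee M N Menu v k + ((k : ℝ) - 1) * Menu.card * vbar) ∂F :=
          integral_mono_ae (integrable_finsetSum _ fun n _ => hintAlloc n)
            ((hintRank.const_mul _).add (integrable_const _))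
            (hval.mono fun v hv => sum_maxAlloc_le_rankGuarantee hk1 hkN hv)
      _ = _ := by
          rw [integral_add (hintRank.const_mul _) (integrable_const _), integral_const]
          simp
  rw [integral_avgMarginal measurable_maxAlloc hintAlloc, inv_mul_eq_div, ← sub_div,
    div_le_iff₀ hN]
  linarith

end Measures

section ConstantProfiles

variable {M N : ℕ} {vbar : ℝ} {Menu : Finset (Bundle M)}

theorem measurable_const_profile : Measurable fun (w : Valuation M) (_ : Fin N) => w :=
  measurable_pi_lambda _ fun _ => measurable_id

theorem profileOK_map_const {G : Measure (Valuation M)} (hG : ValOK M vbar G) :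
    ProfileOK M N vbar (G.map fun w (_ : Fin N) => w) := by
  have := hG.1
  refine ⟨Measure.isProbabilityMeasure_map measurable_const_profile.aemeasurable,
    le_antisymm prob_le_one ?_⟩
  calc (1 : ℝ≥0∞) = G {w | IsValuation M vbar w} := hG.2.symm
    _ ≤ G ((fun w (_ : Fin N) => w) ⁻¹' {v | ∀ n, IsValuation M vbar (v n)}) :=
        measure_mono fun w hw _ => hw
    _ ≤ _ := Measure.le_map_apply measurable_const_profile.aemeasurable _

theorem avgMarginal_map_const (hN : 0 < N) (G : Measure (Valuation M)) :
    avgMarginal M N (G.map fun w (_ : Fin N) => w) = G := by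
  have hmarg : ∀ n : Fin N, (G.map fun w (_ : Fin N) => w).map (fun v => v n) = G := fun n => by
    rw [Measure.map_map (measurable_pi_apply n) measurable_const_profile]
    exact Measure.map_id
  rw [avgMarginal, Finset.sum_congr rfl fun n _ => hmarg n, Finset.sum_const, Finset.card_univ,
    Fintype.card_fin, ← Nat.cast_smul_eq_nsmul ℝ≥0∞, smul_smul,
    ENNReal.inv_mul_cancel (by exact_mod_cast hN.ne') (ENNReal.natCast_ne_top N), one_smul]

theorem surplusEx_eq_sSup (v : Fin N → Valuation M) :
    surplusEx M N Menu v = sSup {y : ℝ | ∃ p : Finset (Bundle M) × (Bundle M → Fin N),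
      (Feasible M Menu p.1 ∧ p.1.card ≤ N ∧ Set.InjOn p.2 ↑p.1) ∧
        y = ∑ b ∈ p.1, v (p.2 b) b} := by
  simp only [surplusEx, Prod.exists, and_assoc, exists_and_left]

theorem surplusEx_nonneg (hN : 0 < N) (v : Fin N → Valuation M) : 0 ≤ surplusEx M N Menu v := by
  rw [surplusEx_eq_sSup]
  refine le_of_eq_of_le ?_ (le_sSup_setOf_exists (a := (∅, fun _ => ⟨0, hN⟩))
    ⟨feasible_empty, by simp, by simp⟩)
  simp

theorem measurable_surplusEx : Measurable (surplusEx M N Menu) := by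
  simp only [funext surplusEx_eq_sSup]
  exact measurable_sSup_setOf_exists fun p => Finset.measurable_sum _ fun b _ =>
    (measurable_pi_apply b).comp (measurable_pi_apply (p.2 b))

theorem surplusEx_const_le_maxAlloc (w : Valuation M) :
    surplusEx M N Menu (fun _ => w) ≤ maxAlloc M Menu w :=
  Real.sSup_le (by rintro _ ⟨X, hX, -, -, -, rfl⟩; exact sum_le_maxAlloc hX) maxAlloc_nonneg

theorem Vsurplus_nonneg (hN : 0 < N) (F : Measure (Fin N → Valuation M)) :
    0 ≤ Vsurplus M N Menu F :=
  integral_nonneg fun v => surplusEx_nonneg hN v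

theorem Vsurplus_map_const_le (hN : 0 < N) {G : Measure (Valuation M)} (hG : ValOK M vbar G) :
    Vsurplus M N Menu (G.map fun w (_ : Fin N) => w) ≤ ∫ w, maxAlloc M Menu w ∂G := by
  have := hG.1
  rw [Vsurplus, integral_map measurable_const_profile.aemeasurable
    measurable_surplusEx.aestronglyMeasurable]
  exact integral_mono_of_nonneg (.of_forall fun w => surplusEx_nonneg hN _)
    (integrable_maxAlloc_comp measurable_id hG.ae_isValuation)
    (.of_forall surplusEx_const_le_maxAlloc)

end ConstantProfiles

theorem sufficient_menu_rank_guarantee_bound_general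
    (M N : ℕ) (vbar : ℝ)
    (Menu : Finset (Bundle M))
    (k : ℕ) (hk1 : 1 ≤ k) (hkN : k ≤ N)
    (GG : Set (Measure (Valuation M))) (hGGne : GG.Nonempty)
    (hGG : ∀ G ∈ GG, ValOK M vbar G)
    (hsufficient :
      sInf ((fun G => ∫ w, maxAlloc M Menu w ∂G) '' GG) =
        sInf ((fun G => ∫ w, maxAlloc M (completeMenu M) w ∂G) '' GG)) :
    sInf ((fun F => ∫ v, rankGuarantee M N Menu v k ∂F) ''
        {F : Measure (Fin N → Valuation M) |
          ProfileOK M N vbar F ∧ avgMarginal M N F ∈ GG}) ≥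
      sInf ((fun F => Vsurplus M N (completeMenu M) F) ''
        {F : Measure (Fin N → Valuation M) |
          ProfileOK M N vbar F ∧ avgMarginal M N F ∈ GG})
        - ((k : ℝ) - 1) * (Menu.card : ℝ) * vbar / (N : ℝ) := by
  have hN : 0 < N := by omega
  set profiles := {F : Measure (Fin N → Valuation M) |
    ProfileOK M N vbar F ∧ avgMarginal M N F ∈ GG}
  have hconst : ∀ G ∈ GG, G.map (fun w (_ : Fin N) => w) ∈ profiles := fun G hG =>
    ⟨profileOK_map_const (hGG G hG), by rwa [avgMarginal_map_const hN]⟩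
  have hVbdd : BddBelow ((fun F => Vsurplus M N (completeMenu M) F) '' profiles) :=
    ⟨0, by rintro _ ⟨F, -, rfl⟩; exact Vsurplus_nonneg hN F⟩
  have hEbdd : BddBelow ((fun G => ∫ w, maxAlloc M Menu w ∂G) '' GG) :=
    ⟨0, by rintro _ ⟨G, -, rfl⟩; exact integral_nonneg fun _ => maxAlloc_nonneg⟩
  have hV : sInf ((fun F => Vsurplus M N (completeMenu M) F) '' profiles) ≤
      sInf ((fun G => ∫ w, maxAlloc M (completeMenu M) w ∂G) '' GG) := by
    refine le_csInf (hGGne.image _) ?_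
    rintro _ ⟨G, hG, rfl⟩
    exact (csInf_le hVbdd ⟨_, hconst G hG, rfl⟩).trans (Vsurplus_map_const_le hN (hGG G hG))
  obtain ⟨G₀, hG₀⟩ := hGGne
  refine le_csInf (Set.Nonempty.image _ ⟨_, hconst G₀ hG₀⟩) ?_
  rintro _ ⟨F, hF, rfl⟩
  calc _ ≤ sInf ((fun G => ∫ w, maxAlloc M (completeMenu M) w ∂G) '' GG)
        - ((k : ℝ) - 1) * Menu.card * vbar / N := sub_le_sub_right hV _
    _ = sInf ((fun G => ∫ w, maxAlloc M Menu w ∂G) '' GG)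
        - ((k : ℝ) - 1) * Menu.card * vbar / N := by rw [hsufficient]
    _ ≤ ∫ w, maxAlloc M Menu w ∂avgMarginal M N F - ((k : ℝ) - 1) * Menu.card * vbar / N :=
        sub_le_sub_right (csInf_le hEbdd ⟨_, hF.2, rfl⟩) _
    _ ≤ ∫ v, rankGuarantee M N Menu v k ∂F := integral_maxAlloc_avgMarginal_sub_le hk1 hkN hF.1

/-- Theorem 3, sufficiency bound: if the menu `𝓜` is `𝔾`-sufficient, then
`inf_{F∈𝔽} E_F[R^k_𝓜(v)] ≥ inf_{F∈𝔽} V*(F) − (k−1)·|𝓜|·v̄/N`. -/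
theorem sufficient_menu_rank_guarantee_bound
    (M N : ℕ) (hM : 1 ≤ M) (vbar : ℝ) (hvbar : 0 ≤ vbar)
    (Menu : Finset (Bundle M)) (hMenu : IsMenu M Menu)
    (hN : Menu.card + 1 ≤ N) (k : ℕ) (hk1 : 1 ≤ k) (hkN : k ≤ N)
    (GG : Set (Measure (Valuation M))) (hGGne : GG.Nonempty)
    (hGG : ∀ G ∈ GG, ValOK M vbar G)
    (hsufficient :
      sInf ((fun G => ∫ w, maxAlloc M Menu w ∂G) '' GG) =
        sInf ((fun G => ∫ w, maxAlloc M (completeMenu M) w ∂G) '' GG)) :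
    sInf ((fun F => ∫ v, rankGuarantee M N Menu v k ∂F) ''
        {F : Measure (Fin N → Valuation M) |
          ProfileOK M N vbar F ∧ avgMarginal M N F ∈ GG}) ≥
      sInf ((fun F => Vsurplus M N (completeMenu M) F) ''
        {F : Measure (Fin N → Valuation M) |
          ProfileOK M N vbar F ∧ avgMarginal M N F ∈ GG})
        - ((k : ℝ) - 1) * (Menu.card : ℝ) * vbar / (N : ℝ) :=
  sufficient_menu_rank_guarantee_bound_general M N vbar Menu k hk1 hkN GG hGGne hGG hsufficient

end RankGuaranteedAuctions
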